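/- arXiv:1606.08134 — 3 statements merged into one kernel-verified Lean document; each statement's English description precedes it below -/
import Mathlib

section
/- The function f(z) = z + conj(z^n)/(αn² + n(1-α)) belongs to W⁰_H(α), and its n-th co-analytic coefficient equals 1/(αn² + n(1-α)); hence the coefficient bound |b_n| ≤ 1/(αn² + n(1-α)) for W⁰_H(α) is sharp. -/
/-! With `g(z) = z ^ n / c` and `c = α n² + n(1 - α) = n + α n (n - 1)`, the operator
`g' + α z g''` sends `z ^ n` to `(n + α n (n - 1)) z ^ (n - 1)`, so it sends `g` to exactly
`z ^ (n - 1)`, of modulus `< 1` on the unit disk, while `h(z) = z` gives `Re (h' + α z h'') = 1`.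
The normalising constant is positive because `α ≥ 0` and `n ≥ 1`. -/

theorem deriv_add_mul_deriv_deriv_pow (a z : ℂ) (n : ℕ) :
    deriv (fun w : ℂ => w ^ n) z + a * z * deriv (deriv fun w : ℂ => w ^ n) z
      = (n + a * n * (n - 1)) * z ^ (n - 1) := by
  rcases n with _ | _ | n
  · simp
  · simp
  · have hderiv : deriv (fun w : ℂ => w ^ (n + 2)) = fun w => ((n + 2 : ℕ) : ℂ) * w ^ (n + 1) := by
      funext w
      exact deriv_pow_field (n + 2)
    rw [hderiv, deriv_const_mul _ (differentiableAt_pow _), deriv_pow_field]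
    simp only [Nat.add_sub_cancel]
    push_cast
    ring

theorem deriv_add_mul_deriv_deriv_pow_div (a c z : ℂ) (n : ℕ) :
    deriv (fun w : ℂ => w ^ n / c) z + a * z * deriv (deriv fun w : ℂ => w ^ n / c) z
      = (n + a * n * (n - 1)) * z ^ (n - 1) / c := by
  have hderiv : deriv (fun w : ℂ => w ^ n / c) = fun w => deriv (fun w : ℂ => w ^ n) w / c := by
    funext w
    exact deriv_div_const c
  rw [hderiv, deriv_div_const, ← deriv_add_mul_deriv_deriv_pow a z n]
  ring

theorem mul_sq_add_mul_one_sub_pos {α x : ℝ} (hα : 0 ≤ α) (hx : 1 ≤ x) :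
    0 < α * x ^ 2 + x * (1 - α) := by
  nlinarith [mul_nonneg hα (by nlinarith : 0 ≤ x ^ 2 - x)]

/-- sharpness of the bound |b_n| ≤ 1/(αn² + n(1-α)):
the function f(z) = z + conj(z^n)/(αn² + n(1-α)) belongs to W⁰_H(α) and its
n-th co-analytic coefficient has modulus exactly 1/(αn² + n(1-α)). -/
theorem stmt_4 (α : ℝ) (hα : 0 ≤ α) (n : ℕ) (hn : 2 ≤ n) :
    (∀ z ∈ Metric.ball (0 : ℂ) 1,
        ‖(deriv (fun w : ℂ => w ^ n / ((α : ℂ) * (n : ℂ) ^ 2 + (n : ℂ) * (1 - (α : ℂ)))) z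
              + (α : ℂ) * z *
                deriv (deriv (fun w : ℂ => w ^ n / ((α : ℂ) * (n : ℂ) ^ 2 + (n : ℂ) * (1 - (α : ℂ))))) z)‖
          < (deriv (fun w : ℂ => w) z + (α : ℂ) * z * deriv (deriv (fun w : ℂ => w)) z).re)
      ∧ ‖(1 / ((α : ℂ) * (n : ℂ) ^ 2 + (n : ℂ) * (1 - (α : ℂ))))‖
          = 1 / (α * (n : ℝ) ^ 2 + (n : ℝ) * (1 - α)) := by
  have hc : 0 < α * (n : ℝ) ^ 2 + n * (1 - α) :=
    mul_sq_add_mul_one_sub_pos hα (by exact_mod_cast (by omega : 1 ≤ n))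
  have hc_ofReal : (α : ℂ) * (n : ℂ) ^ 2 + (n : ℂ) * (1 - (α : ℂ))
      = ((α * (n : ℝ) ^ 2 + n * (1 - α) : ℝ) : ℂ) := by
    push_cast
    ring
  refine ⟨fun z hz => ?_, ?_⟩
  · have hc_ne : (α : ℂ) * (n : ℂ) ^ 2 + (n : ℂ) * (1 - (α : ℂ)) ≠ 0 := by
      rw [hc_ofReal]
      exact_mod_cast hc.ne'
    rw [deriv_add_mul_deriv_deriv_pow_div, mul_div_right_comm,
      show (n : ℂ) + α * n * (n - 1) = α * n ^ 2 + n * (1 - α) by ring, div_self hc_ne, one_mul,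
      deriv_id'']
    simp only [deriv_const, mul_zero, add_zero, Complex.one_re, norm_pow]
    exact pow_lt_one₀ (norm_nonneg z) (mem_ball_zero_iff.mp hz) (by omega)
  · rw [hc_ofReal, norm_div, norm_one, Complex.norm_real, Real.norm_of_nonneg hc.le]
end

section
/- Let f = h + conj(g) with h(z) = z + Σ_{n≥2} a_n z^n and g(z) = Σ_{n≥2} b_n z^n analytic on the unit disk. If Σ_{n≥2} (αn² + (1−α)n)(|a_n| + |b_n|) < 1, then f ∈ W⁰_H(α), i.e., Re(h'(z) + αz h''(z)) > |g'(z) + αz g''(z)| for all z in the unit disk. -/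
/-!
Write `L f = f' + α z f''`. Termwise differentiation of the power series on the disk and the
identity `n + α n (n - 1) = α n² + (1 - α) n` give
`L h z = 1 + ∑_{n ≥ 2} (α n² + (1 - α) n) aₙ z^(n-1)`, and the same for `g` with the `bₙ` and
no constant term. For `α ≥ 0` the weights are nonnegative, so on the disk the two sums are
bounded in modulus by `A = ∑ (α n² + (1 - α) n) |aₙ|` and `B = ∑ (α n² + (1 - α) n) |bₙ|`,
whence `Re L h z ≥ 1 - A > B ≥ |L g z|`.
-/

open FormalMultilinearSeries NNReal ENNReal Metric

section PowerSeries

variable {𝕜 : Type*} [RCLike 𝕜] {c : ℕ → 𝕜} {f : 𝕜 → 𝕜}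

theorem hasFPowerSeriesOnBall_ofScalars_of_hasSum {r : ℝ≥0} (hr : 0 < r)
    (hf : ∀ z ∈ ball (0 : 𝕜) r, HasSum (fun n => c n * z ^ n) (f z)) :
    HasFPowerSeriesOnBall f (ofScalars 𝕜 c) 0 r where
  r_le := by
    refine ENNReal.le_of_forall_pos_nnreal_lt fun ρ _ hρ => ?_
    refine (ofScalars 𝕜 c).le_radius_of_tendsto (l := 0) ?_
    have := (hf ((ρ : ℝ) : 𝕜) (by simpa using hρ)).summable.tendsto_atTop_zero.norm
    simpa [ofScalars_norm] using this
  r_pos := by exact_mod_cast hr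
  hasSum {z} hz := by
    rw [eball_coe, mem_ball_zero_iff] at hz
    simpa [ofScalars_apply_eq, mul_comm] using hf z (by simpa using hz)

theorem HasFPowerSeriesOnBall.deriv_ofScalars {r : ℝ≥0∞}
    (hf : HasFPowerSeriesOnBall f (ofScalars 𝕜 c) 0 r) :
    HasFPowerSeriesOnBall (deriv f) (ofScalars 𝕜 fun n => (n + 1) * c (n + 1)) 0 r := by
  set L := ContinuousLinearMap.apply 𝕜 𝕜 (1 : 𝕜)
  have hseries : L.compFormalMultilinearSeries (ofScalars 𝕜 c).derivSeries =
      ofScalars 𝕜 fun n => (n + 1) * c (n + 1) := by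
    funext n
    rw [← mkPiRing_coeff_eq (ofScalars 𝕜 _), coeff_ofScalars,
      ← mkPiRing_coeff_eq (L.compFormalMultilinearSeries _), coeff,
      ContinuousLinearMap.compFormalMultilinearSeries_apply]
    simp [L]
  rw [← hseries]
  exact L.comp_hasFPowerSeriesOnBall hf.fderiv

theorem hasSum_deriv_of_forall_hasSum {r : ℝ}
    (hf : ∀ z ∈ ball (0 : 𝕜) r, HasSum (fun n => c n * z ^ n) (f z)) :
    ∀ z ∈ ball (0 : 𝕜) r, HasSum (fun n => (n + 1) * c (n + 1) * z ^ n) (deriv f z) := by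
  intro z hz
  lift r to ℝ≥0 using (norm_nonneg z).trans (mem_ball_zero_iff.mp hz).le
  have hr : 0 < r := by exact_mod_cast nonempty_ball.mp ⟨z, hz⟩
  have := (hasFPowerSeriesOnBall_ofScalars_of_hasSum hr hf).deriv_ofScalars.hasSum
    (y := z) (by rwa [eball_coe])
  simpa [ofScalars_apply_eq, mul_comm] using this

end PowerSeries

def coeffWeight (α x : ℝ) : ℝ := α * x ^ 2 + (1 - α) * x

theorem coeffWeight_nonneg {α x : ℝ} (hα : 0 ≤ α) (hx : 1 ≤ x) : 0 ≤ coeffWeight α x := by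
  have hfactor : coeffWeight α x = x * (1 + α * (x - 1)) := by
    rw [coeffWeight]
    ring
  have : 0 ≤ α * (x - 1) := mul_nonneg hα (by linarith)
  rw [hfactor]
  nlinarith

theorem hasSum_deriv_add_mul_deriv_deriv (α : ℝ) {c : ℕ → ℂ} {f : ℂ → ℂ} {r : ℝ}
    (hf : ∀ z ∈ ball (0 : ℂ) r, HasSum (fun n => c n * z ^ n) (f z)) {z : ℂ}
    (hz : z ∈ ball (0 : ℂ) r) :
    HasSum (fun m : ℕ => (coeffWeight α (m + 2) : ℂ) * c (m + 2) * z ^ (m + 1))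
      (deriv f z + α * z * deriv (deriv f) z - c 1) := by
  have hf' := hasSum_deriv_of_forall_hasSum hf
  have key := ((hasSum_nat_add_iff' 1).mpr (hf' z hz)).add
    ((hasSum_deriv_of_forall_hasSum hf' z hz).mul_left (α * z))
  simp only [Finset.sum_range_one, Nat.cast_zero, zero_add, one_mul, pow_zero, mul_one,
    sub_add_eq_add_sub] at key
  refine key.congr_fun fun m => ?_
  rw [coeffWeight]
  push_cast
  ring

theorem norm_le_tsum_of_hasSum {w : ℕ → ℝ} (hw : ∀ m, 0 ≤ w m) {c : ℕ → ℂ} {z S : ℂ}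
    (hz : ‖z‖ ≤ 1) (hS : HasSum (fun m => (w m : ℂ) * c m * z ^ (m + 1)) S)
    (hsum : Summable fun m => w m * ‖c m‖) : ‖S‖ ≤ ∑' m, w m * ‖c m‖ := by
  refine hS.norm_le_of_bounded hsum.hasSum fun m => ?_
  rw [norm_mul, norm_mul, norm_pow, Complex.norm_real, Real.norm_of_nonneg (hw m)]
  exact mul_le_of_le_one_right (mul_nonneg (hw m) (norm_nonneg _))
    (pow_le_one₀ (norm_nonneg z) hz)

theorem stmt_6_general (α : ℝ) (hα : 0 ≤ α) (a b : ℕ → ℂ) (h g : ℂ → ℂ)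
    (ha1 : a 1 = 1) (hb1 : b 1 = 0)
    (hrep : ∀ z ∈ Metric.ball (0 : ℂ) 1, HasSum (fun n => a n * z ^ n) (h z))
    (grep : ∀ z ∈ Metric.ball (0 : ℂ) 1, HasSum (fun n => b n * z ^ n) (g z))
    (hsum : Summable (fun m : ℕ =>
        (α * ((m : ℝ) + 2) ^ 2 + (1 - α) * ((m : ℝ) + 2))
          * (‖a (m + 2)‖ + ‖b (m + 2)‖)))
    (hlt : ∑' m : ℕ,
        (α * ((m : ℝ) + 2) ^ 2 + (1 - α) * ((m : ℝ) + 2))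
          * (‖a (m + 2)‖ + ‖b (m + 2)‖) < 1) :
    ∀ z ∈ Metric.ball (0 : ℂ) 1,
      ‖deriv g z + (α : ℂ) * z * deriv (deriv g) z‖
        < (deriv h z + (α : ℂ) * z * deriv (deriv h) z).re := by
  intro z hz
  set w : ℕ → ℝ := fun m => coeffWeight α (m + 2)
  have hw : ∀ m, 0 ≤ w m := fun m => coeffWeight_nonneg hα (by linarith [m.cast_nonneg (α := ℝ)])
  have hsa : Summable fun m => w m * ‖a (m + 2)‖ :=
    hsum.of_nonneg_of_le (fun m => mul_nonneg (hw m) (norm_nonneg _))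
      fun m => mul_le_mul_of_nonneg_left (le_add_of_nonneg_right (norm_nonneg _)) (hw m)
  have hsb : Summable fun m => w m * ‖b (m + 2)‖ :=
    hsum.of_nonneg_of_le (fun m => mul_nonneg (hw m) (norm_nonneg _))
      fun m => mul_le_mul_of_nonneg_left (le_add_of_nonneg_left (norm_nonneg _)) (hw m)
  have hab : ∑' m, w m * ‖a (m + 2)‖ + ∑' m, w m * ‖b (m + 2)‖ < 1 := by
    rw [← hsa.tsum_add hsb]
    exact lt_of_eq_of_lt (tsum_congr fun m => (mul_add _ _ _).symm) hlt
  have hz1 := (mem_ball_zero_iff.mp hz).le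
  have ha := norm_le_tsum_of_hasSum hw hz1 (hasSum_deriv_add_mul_deriv_deriv α hrep hz) hsa
  have hb := norm_le_tsum_of_hasSum hw hz1 (hasSum_deriv_add_mul_deriv_deriv α grep hz) hsb
  rw [ha1] at ha
  rw [hb1, sub_zero] at hb
  have hre := neg_le_of_abs_le ((Complex.abs_re_le_norm _).trans ha)
  rw [Complex.sub_re, Complex.one_re] at hre
  linarith

/-- coefficient sufficient condition for membership in W⁰_H(α). -/
theorem stmt_6 (α : ℝ) (hα : 0 ≤ α) (a b : ℕ → ℂ) (h g : ℂ → ℂ)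
    (ha0 : a 0 = 0) (ha1 : a 1 = 1) (hb0 : b 0 = 0) (hb1 : b 1 = 0)
    (hrep : ∀ z ∈ Metric.ball (0 : ℂ) 1, HasSum (fun n => a n * z ^ n) (h z))
    (grep : ∀ z ∈ Metric.ball (0 : ℂ) 1, HasSum (fun n => b n * z ^ n) (g z))
    (hsum : Summable (fun m : ℕ =>
        (α * ((m : ℝ) + 2) ^ 2 + (1 - α) * ((m : ℝ) + 2))
          * (‖a (m + 2)‖ + ‖b (m + 2)‖)))
    (hlt : ∑' m : ℕ,
        (α * ((m : ℝ) + 2) ^ 2 + (1 - α) * ((m : ℝ) + 2))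
          * (‖a (m + 2)‖ + ‖b (m + 2)‖) < 1) :
    ∀ z ∈ Metric.ball (0 : ℂ) 1,
      ‖deriv g z + (α : ℂ) * z * deriv (deriv g) z‖
        < (deriv h z + (α : ℂ) * z * deriv (deriv h) z).re :=
  stmt_6_general α hα a b h g ha1 hb1 hrep grep hsum hlt
end

section
/- If 0 ≤ β < α, then W⁰_H(α) ⊂ W⁰_H(β): every harmonic f = h + conj(g) satisfying Re(h'(z) + αz h''(z)) > |g'(z) + αz g''(z)| on the unit disk also satisfies Re(h'(z) + βz h''(z)) > |g'(z) + βz g''(z)| on the unit disk. -/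
open Metric Set intervalIntegral

/-!
Write `L_α φ = φ + α z φ'`. Since `d/ds [s φ(s^α z)] = (L_α φ)(s^α z)`, every `φ` holomorphic on a
disk about `0` is the average `φ z = ∫₀¹ (L_α φ)(s^α z) ds`. Applied to `h'` and `g'`, the
hypothesis `|L_α g'| < Re L_α h'` therefore integrates to `|g'| < Re h'`. Finally
`L_β = (1 - β/α) + (β/α) L_α` and the cone `{(a, b) | |b| < Re a}` is convex.
-/

noncomputable def eulerOp (a : ℂ) (φ : ℂ → ℂ) (w : ℂ) : ℂ := φ w + a * w * deriv φ w

section RadialIntegral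

variable {r α : ℝ} {φ : ℂ → ℂ} {z : ℂ}

lemma rpow_smul_mem_ball (hα : 0 < α) (hz : z ∈ ball (0 : ℂ) r) {s : ℝ} (hs : s ∈ Icc (0 : ℝ) 1) :
    s ^ α • z ∈ ball (0 : ℂ) r := by
  rw [mem_ball_zero_iff] at hz ⊢
  calc ‖s ^ α • z‖ = s ^ α * ‖z‖ := by
        rw [norm_smul, Real.norm_of_nonneg (Real.rpow_nonneg hs.1 α)]
    _ ≤ 1 * ‖z‖ := by gcongr; exact Real.rpow_le_one hs.1 hs.2 hα.le
    _ < r := by rwa [one_mul]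

lemma continuousOn_eulerOp_comp_rpow_smul (hα : 0 < α) (hφ : DifferentiableOn ℂ φ (ball 0 r))
    (hz : z ∈ ball (0 : ℂ) r) (a : ℂ) :
    ContinuousOn (fun s : ℝ ↦ eulerOp a φ (s ^ α • z)) (Icc 0 1) := by
  have hpath : ContinuousOn (fun s : ℝ ↦ s ^ α • z) (Icc 0 1) :=
    (continuous_id.continuousOn.rpow_const fun _ _ ↦ Or.inr hα.le).smul continuousOn_const
  have hmaps : MapsTo (fun s : ℝ ↦ s ^ α • z) (Icc 0 1) (ball 0 r) :=
    fun _ hs ↦ rpow_smul_mem_ball hα hz hs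
  exact (hφ.continuousOn.comp hpath hmaps).add ((continuousOn_const.mul hpath).mul
    ((hφ.deriv isOpen_ball).continuousOn.comp hpath hmaps))

lemma hasDerivAt_smul_comp_rpow_smul (hα : 0 < α) (hφ : DifferentiableOn ℂ φ (ball 0 r))
    (hz : z ∈ ball (0 : ℂ) r) {s : ℝ} (hs : s ∈ Ioo (0 : ℝ) 1) :
    HasDerivAt (fun s : ℝ ↦ s • φ (s ^ α • z)) (eulerOp α φ (s ^ α • z)) s := by
  have hw := rpow_smul_mem_ball hα hz (Ioo_subset_Icc_self hs)
  have hpath : HasDerivAt (fun s : ℝ ↦ s ^ α • z) ((α * s ^ (α - 1)) • z) s :=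
    (Real.hasDerivAt_rpow_const (Or.inl hs.1.ne')).smul_const z
  have hφw : HasDerivAt φ (deriv φ (s ^ α • z)) (s ^ α • z) :=
    (hφ.differentiableAt (isOpen_ball.mem_nhds hw)).hasDerivAt
  have hs_rpow : s * s ^ (α - 1) = s ^ α := by
    rw [mul_comm, ← Real.rpow_add_one hs.1.ne', sub_add_cancel]
  refine ((hasDerivAt_id s).smul (hφw.scomp s hpath)).congr_deriv ?_
  simp only [eulerOp, id, Function.comp_apply, one_smul, Complex.real_smul, smul_eq_mul,
    ← hs_rpow]
  push_cast
  ring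

theorem eq_integral_eulerOp_comp_rpow_smul (hα : 0 < α) (hφ : DifferentiableOn ℂ φ (ball 0 r))
    (hz : z ∈ ball (0 : ℂ) r) :
    φ z = ∫ s in (0 : ℝ)..1, eulerOp α φ (s ^ α • z) := by
  have hcont : ContinuousOn (fun s : ℝ ↦ s • φ (s ^ α • z)) (Icc 0 1) :=
    continuousOn_id.smul (hφ.continuousOn.comp
      ((continuous_id.continuousOn.rpow_const fun _ _ ↦ Or.inr hα.le).smul continuousOn_const)
      fun _ hs ↦ rpow_smul_mem_ball hα hz hs)
  rw [integral_eq_sub_of_hasDerivAt_of_le zero_le_one hcont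
    (fun s hs ↦ hasDerivAt_smul_comp_rpow_smul hα hφ hz hs)
    ((continuousOn_eulerOp_comp_rpow_smul hα hφ hz α).intervalIntegrable_of_Icc zero_le_one)]
  simp [Real.zero_rpow hα.ne']

end RadialIntegral

theorem norm_lt_re_of_forall_norm_eulerOp_lt_re {r α : ℝ} {A B : ℂ → ℂ} (hα : 0 < α)
    (hA : DifferentiableOn ℂ A (ball 0 r)) (hB : DifferentiableOn ℂ B (ball 0 r))
    (hAB : ∀ w ∈ ball (0 : ℂ) r, ‖eulerOp α B w‖ < (eulerOp α A w).re)
    {z : ℂ} (hz : z ∈ ball (0 : ℂ) r) : ‖B z‖ < (A z).re := by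
  have hAc := continuousOn_eulerOp_comp_rpow_smul hα hA hz α
  have hBc := continuousOn_eulerOp_comp_rpow_smul hα hB hz α
  have hlt : ∀ s ∈ Icc (0 : ℝ) 1,
      ‖eulerOp α B (s ^ α • z)‖ < (eulerOp α A (s ^ α • z)).re :=
    fun s hs ↦ hAB _ (rpow_smul_mem_ball hα hz hs)
  calc ‖B z‖ ≤ ∫ s in (0 : ℝ)..1, ‖eulerOp α B (s ^ α • z)‖ := by
        rw [eq_integral_eulerOp_comp_rpow_smul hα hB hz]
        exact norm_integral_le_integral_norm zero_le_one
    _ < ∫ s in (0 : ℝ)..1, (eulerOp α A (s ^ α • z)).re :=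
        integral_lt_integral_of_continuousOn_of_le_of_exists_lt zero_lt_one
          (continuous_norm.comp_continuousOn hBc) (Complex.continuous_re.comp_continuousOn hAc)
          (fun s hs ↦ (hlt s (Ioc_subset_Icc_self hs)).le)
          ⟨0, left_mem_Icc.2 zero_le_one, hlt 0 (left_mem_Icc.2 zero_le_one)⟩
    _ = (A z).re := by
        rw [eq_integral_eulerOp_comp_rpow_smul hα hA hz]
        exact Complex.reCLM.intervalIntegral_comp_comm
          (hAc.intervalIntegrable_of_Icc zero_le_one)

lemma eulerOp_ofReal_mul (t : ℝ) (a : ℂ) (φ : ℂ → ℂ) (w : ℂ) :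
    eulerOp (t * a) φ w = (1 - t) • φ w + t • eulerOp a φ w := by
  simp only [eulerOp, Complex.real_smul]
  push_cast
  ring

lemma norm_smul_add_smul_lt_re {a₀ a₁ b₀ b₁ : ℂ} {t : ℝ} (ht₀ : 0 ≤ t) (ht₁ : t < 1)
    (h₀ : ‖b₀‖ < a₀.re) (h₁ : ‖b₁‖ ≤ a₁.re) :
    ‖(1 - t) • b₀ + t • b₁‖ < ((1 - t) • a₀ + t • a₁).re := by
  calc ‖(1 - t) • b₀ + t • b₁‖ ≤ (1 - t) * ‖b₀‖ + t * ‖b₁‖ := by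
        refine (norm_add_le _ _).trans_eq ?_
        rw [norm_smul, norm_smul, Real.norm_of_nonneg (sub_nonneg.2 ht₁.le),
          Real.norm_of_nonneg ht₀]
    _ < (1 - t) * a₀.re + t * a₁.re :=
        add_lt_add_of_lt_of_le (mul_lt_mul_of_pos_left h₀ (sub_pos.2 ht₁))
          (mul_le_mul_of_nonneg_left h₁ ht₀)
    _ = ((1 - t) • a₀ + t • a₁).re := by simp

theorem stmt_19_general (α β : ℝ) (hβ : 0 ≤ β) (hβα : β < α) (h g : ℂ → ℂ)
    (hh : DifferentiableOn ℂ h (Metric.ball 0 1))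
    (hg : DifferentiableOn ℂ g (Metric.ball 0 1))
    (hf : ∀ z ∈ Metric.ball (0 : ℂ) 1,
        ‖deriv g z + (α : ℂ) * z * deriv (deriv g) z‖
          < (deriv h z + (α : ℂ) * z * deriv (deriv h) z).re) :
    ∀ z ∈ Metric.ball (0 : ℂ) 1,
      ‖deriv g z + (β : ℂ) * z * deriv (deriv g) z‖
        < (deriv h z + (β : ℂ) * z * deriv (deriv h) z).re := by
  intro z hz
  have hα : 0 < α := hβ.trans_lt hβα
  have hβ_eq : (β : ℂ) = ((β / α : ℝ) : ℂ) * α := by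
    rw [← Complex.ofReal_mul, div_mul_cancel₀ β hα.ne']
  have hbase : ‖deriv g z‖ < (deriv h z).re :=
    norm_lt_re_of_forall_norm_eulerOp_lt_re hα (hh.deriv isOpen_ball) (hg.deriv isOpen_ball)
      hf hz
  change ‖eulerOp β (deriv g) z‖ < (eulerOp β (deriv h) z).re
  rw [hβ_eq, eulerOp_ofReal_mul, eulerOp_ofReal_mul]
  exact norm_smul_add_smul_lt_re (div_nonneg hβ hα.le) ((div_lt_one hα).2 hβα) hbase (hf z hz).le

/-- if 0 ≤ β < α then W⁰_H(α) ⊆ W⁰_H(β). -/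
theorem stmt_19 (α β : ℝ) (hβ : 0 ≤ β) (hβα : β < α) (h g : ℂ → ℂ)
    (hh : DifferentiableOn ℂ h (Metric.ball 0 1))
    (hg : DifferentiableOn ℂ g (Metric.ball 0 1))
    (h0 : h 0 = 0) (h1 : deriv h 0 = 1) (g0 : g 0 = 0) (g1 : deriv g 0 = 0)
    (hf : ∀ z ∈ Metric.ball (0 : ℂ) 1,
        ‖deriv g z + (α : ℂ) * z * deriv (deriv g) z‖
          < (deriv h z + (α : ℂ) * z * deriv (deriv h) z).re) :
    ∀ z ∈ Metric.ball (0 : ℂ) 1,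
      ‖deriv g z + (β : ℂ) * z * deriv (deriv g) z‖
        < (deriv h z + (β : ℂ) * z * deriv (deriv h) z).re :=
  stmt_19_general α β hβ hβα h g hh hg hf
end
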